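/- Let a > 0 and b ∈ ℝ. Then the parabolas y = a·x² + b·x and y = a·x² + (b + 2a)·x have the same lower and upper average speeds under grid peeling: v_-(x ↦ a·x² + b·x) = v_-(x ↦ a·x² + (b + 2a)·x) and v_+(x ↦ a·x² + b·x) = v_+(x ↦ a·x² + (b + 2a)·x). -/
import Mathlib

open Set Filter Pointwise

/-- One grid peeling step: remove the extreme points of the convex hull. -/
noncomputable def peel (U : Set (ℝ × ℝ)) : Set (ℝ × ℝ) :=
  U \ Set.extremePoints ℝ (convexHull ℝ U)

/-- The lattice points on or above the graph of `g`. -/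
def Ugrid (g : ℝ → ℝ) : Set (ℝ × ℝ) :=
  {p | (∃ i j : ℤ, p = ((i : ℝ), (j : ℝ))) ∧ g p.1 ≤ p.2}

/-- Lower average speed of the grid peeling process started on `{(x,y) ∈ ℤ² : y ≥ g x}`. -/
noncomputable def vLower (g : ℝ → ℝ) : ℝ :=
  Filter.liminf (fun m : ℕ =>
    sSup {γ : ℝ | peel^[m] (Ugrid g) ⊆ Ugrid (fun x => g x + γ)} / m) Filter.atTop

/-- Upper average speed of the grid peeling process started on `{(x,y) ∈ ℤ² : y ≥ g x}`. -/
noncomputable def vUpper (g : ℝ → ℝ) : ℝ :=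
  Filter.limsup (fun m : ℕ =>
    sInf {γ : ℝ | Ugrid (fun x => g x + γ) ⊆ peel^[m] (Ugrid g)} / m) Filter.atTop

section Aux

lemma extremePoints_mono' {s t : Set (ℝ × ℝ)} (hst : s ⊆ t) {x : ℝ × ℝ} (hx : x ∈ s)
    (hxt : x ∈ Set.extremePoints ℝ t) : x ∈ Set.extremePoints ℝ s := by
  rw [mem_extremePoints] at hxt ⊢
  exact ⟨hx, fun x₁ h₁ x₂ h₂ hseg => hxt.2 x₁ (hst h₁) x₂ (hst h₂) hseg⟩

lemma peel_subset (U : Set (ℝ × ℝ)) : peel U ⊆ U := Set.diff_subset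

lemma peel_iterate_subset (m : ℕ) (U : Set (ℝ × ℝ)) : peel^[m] U ⊆ U := by
  induction m with
  | zero => simp
  | succ n ih => rw [Function.iterate_succ_apply']; exact (peel_subset _).trans ih

lemma peel_mono {A B : Set (ℝ × ℝ)} (h : A ⊆ B) : peel A ⊆ peel B := by
  rintro x ⟨hxA, hxe⟩
  refine ⟨h hxA, fun hxB => hxe ?_⟩
  exact extremePoints_mono' (convexHull_mono h) (subset_convexHull ℝ A hxA) hxB

lemma peel_iterate_mono (m : ℕ) {A B : Set (ℝ × ℝ)} (h : A ⊆ B) :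
    peel^[m] A ⊆ peel^[m] B := by
  induction m with
  | zero => simpa
  | succ n ih =>
      rw [Function.iterate_succ_apply', Function.iterate_succ_apply']
      exact peel_mono ih

lemma extremePoints_translate (v : ℝ × ℝ) (s : Set (ℝ × ℝ)) :
    Set.extremePoints ℝ ((fun p => v + p) '' s) = (fun p => v + p) '' Set.extremePoints ℝ s := by
  ext x
  constructor
  · rintro hx
    obtain ⟨y, hy, rfl⟩ := hx.1
    refine ⟨y, ?_, rfl⟩
    rw [mem_extremePoints] at hx ⊢
    refine ⟨hy, fun x₁ h₁ x₂ h₂ hseg => ?_⟩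
    have := hx.2 (v + x₁) ⟨x₁, h₁, rfl⟩ (v + x₂) ⟨x₂, h₂, rfl⟩
      ((mem_openSegment_translate ℝ v).2 hseg)
    exact ⟨add_left_cancel this.1, add_left_cancel this.2⟩
  · rintro ⟨y, hy, rfl⟩
    rw [mem_extremePoints] at hy ⊢
    refine ⟨⟨y, hy.1, rfl⟩, ?_⟩
    rintro _ ⟨x₁, h₁, rfl⟩ _ ⟨x₂, h₂, rfl⟩ hseg
    have := hy.2 x₁ h₁ x₂ h₂ ((mem_openSegment_translate ℝ v).1 hseg)
    rw [this.1, this.2]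
    exact ⟨rfl, rfl⟩

lemma convexHull_translate (v : ℝ × ℝ) (s : Set (ℝ × ℝ)) :
    convexHull ℝ ((fun p => v + p) '' s) = (fun p => v + p) '' convexHull ℝ s := by
  have h1 : (fun p : ℝ × ℝ => v + p) '' s = v +ᵥ s := by
    rw [← Set.image_vadd]; rfl
  have h2 : (fun p : ℝ × ℝ => v + p) '' convexHull ℝ s = v +ᵥ convexHull ℝ s := by
    rw [← Set.image_vadd]; rfl
  rw [h1, h2, convexHull_vadd]

lemma peel_translate (v : ℝ × ℝ) (U : Set (ℝ × ℝ)) :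
    peel ((fun p => v + p) '' U) = (fun p => v + p) '' peel U := by
  have hinj : Function.Injective (fun p : ℝ × ℝ => v + p) := fun p q h => by
    simpa using h
  unfold peel
  rw [convexHull_translate, extremePoints_translate, ← Set.image_diff hinj]

lemma peel_iterate_translate (m : ℕ) (v : ℝ × ℝ) (U : Set (ℝ × ℝ)) :
    peel^[m] ((fun p => v + p) '' U) = (fun p => v + p) '' peel^[m] U := by
  induction m with
  | zero => simp
  | succ n ih =>
      rw [Function.iterate_succ_apply', Function.iterate_succ_apply', ih, peel_translate]

lemma translate_cancel (v : ℝ × ℝ) (s : Set (ℝ × ℝ)) :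
    (fun p : ℝ × ℝ => v + p) '' ((fun p : ℝ × ℝ => -v + p) '' s) = s := by
  rw [← Set.image_comp]
  have : ((fun p : ℝ × ℝ => v + p) ∘ fun p : ℝ × ℝ => -v + p) = id := by
    funext p; simp
  rw [this, Set.image_id]

lemma Ugrid_antitone {g h : ℝ → ℝ} (hle : ∀ x : ℝ, g x ≤ h x) : Ugrid h ⊆ Ugrid g :=
  fun p hp => ⟨hp.1, le_trans (hle p.1) hp.2⟩

lemma Ugrid_congr {g h : ℝ → ℝ} (he : ∀ x, g x = h x) : Ugrid g = Ugrid h := by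
  rw [funext he]

lemma Ugrid_translate (g : ℝ → ℝ) (q r : ℤ) :
    (fun p : ℝ × ℝ => ((q : ℝ), (r : ℝ)) + p) '' Ugrid g
      = Ugrid (fun x => g (x - q) + r) := by
  ext ⟨x, y⟩
  constructor
  · rintro ⟨⟨u, w⟩, ⟨⟨i, j, hij⟩, hg⟩, heq⟩
    obtain ⟨rfl, rfl⟩ : u = (i : ℝ) ∧ w = (j : ℝ) := Prod.mk.injEq .. ▸ hij
    obtain ⟨rfl, rfl⟩ : (q : ℝ) + i = x ∧ (r : ℝ) + j = y := Prod.mk.injEq .. ▸ heq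
    refine ⟨⟨q + i, r + j, by push_cast; rfl⟩, ?_⟩
    simp only
    have : ((q : ℝ) + i) - q = i := by ring
    rw [this]
    simp only at hg
    linarith
  · rintro ⟨⟨i, j, hij⟩, hg⟩
    obtain ⟨rfl, rfl⟩ : x = (i : ℝ) ∧ y = (j : ℝ) := Prod.mk.injEq .. ▸ hij
    refine ⟨(((i - q : ℤ) : ℝ), ((j - r : ℤ) : ℝ)), ⟨⟨i - q, j - r, rfl⟩, ?_⟩, ?_⟩
    · simp only
      push_cast
      simp only at hg
      linarith
    · rw [Prod.ext_iff]
      constructor <;> · simp only [Prod.fst_add, Prod.snd_add]; push_cast; ring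

lemma sSup_eq_sSup_of_eps {A B : Set ℝ}
    (h1 : ∀ a ∈ A, ∀ ε > (0:ℝ), a - ε ∈ B) (h2 : ∀ a ∈ B, ∀ ε > (0:ℝ), a - ε ∈ A) :
    sSup A = sSup B := by
  have key : ∀ {A B : Set ℝ}, (∀ a ∈ A, ∀ ε > (0:ℝ), a - ε ∈ B) →
      (∀ a ∈ B, ∀ ε > (0:ℝ), a - ε ∈ A) → sSup A ≤ sSup B := by
    intro A B hAB hBA
    by_cases hA : A.Nonempty
    · have hB : B.Nonempty := ⟨hA.choose - 1, hAB _ hA.choose_spec 1 one_pos⟩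
      by_cases hbB : BddAbove B
      · refine le_of_forall_pos_le_add fun ε hε => ?_
        refine csSup_le hA fun a ha => ?_
        have := le_csSup hbB (hAB a ha ε hε)
        linarith
      · have hbA : ¬BddAbove A := by
          rintro ⟨M, hM⟩
          exact hbB ⟨M + 1, fun b hb => by have := hM (hBA b hb 1 one_pos); linarith⟩
        rw [Real.sSup_of_not_bddAbove hbA, Real.sSup_of_not_bddAbove hbB]
    · have hB : ¬B.Nonempty := fun ⟨b, hb⟩ => hA ⟨b - 1, hBA b hb 1 one_pos⟩
      rw [not_nonempty_iff_eq_empty.1 hA, not_nonempty_iff_eq_empty.1 hB]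
  exact le_antisymm (key h1 h2) (key h2 h1)

lemma sInf_eq_sInf_of_eps {A B : Set ℝ}
    (h1 : ∀ a ∈ A, ∀ ε > (0:ℝ), a + ε ∈ B) (h2 : ∀ a ∈ B, ∀ ε > (0:ℝ), a + ε ∈ A) :
    sInf A = sInf B := by
  have key : ∀ {A B : Set ℝ}, (∀ a ∈ A, ∀ ε > (0:ℝ), a + ε ∈ B) →
      (∀ a ∈ B, ∀ ε > (0:ℝ), a + ε ∈ A) → sInf B ≤ sInf A := by
    intro A B hAB hBA
    by_cases hA : A.Nonempty
    · have hB : B.Nonempty := ⟨hA.choose + 1, hAB _ hA.choose_spec 1 one_pos⟩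
      by_cases hbB : BddBelow B
      · refine le_of_forall_pos_le_add fun ε hε => ?_
        have : sInf B - ε ≤ sInf A := by
          refine le_csInf hA fun a ha => ?_
          have := csInf_le hbB (hAB a ha ε hε)
          linarith
        linarith
      · have hbA : ¬BddBelow A := by
          rintro ⟨M, hM⟩
          exact hbB ⟨M - 1, fun b hb => by have := hM (hBA b hb 1 one_pos); linarith⟩
        rw [Real.sInf_of_not_bddBelow hbA, Real.sInf_of_not_bddBelow hbB]
    · have hB : ¬B.Nonempty := fun ⟨b, hb⟩ => hA ⟨b + 1, hBA b hb 1 one_pos⟩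
      rw [not_nonempty_iff_eq_empty.1 hA, not_nonempty_iff_eq_empty.1 hB]
  exact le_antisymm (key h2 h1) (key h1 h2)

lemma liminf_eq_of_close {u v : ℕ → ℝ}
    (h : ∀ ε > (0:ℝ), ∀ᶠ m in atTop, |u m - v m| ≤ ε) :
    liminf u atTop = liminf v atTop := by
  rw [liminf_eq, liminf_eq]
  refine sSup_eq_sSup_of_eps ?_ ?_ <;>
  · intro a ha ε hε
    filter_upwards [h ε hε, ha] with m h1 h2
    have := abs_le.1 h1
    linarith [this.1, this.2]

lemma limsup_eq_of_close {u v : ℕ → ℝ}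
    (h : ∀ ε > (0:ℝ), ∀ᶠ m in atTop, |u m - v m| ≤ ε) :
    limsup u atTop = limsup v atTop := by
  rw [limsup_eq, limsup_eq]
  refine sInf_eq_sInf_of_eps ?_ ?_ <;>
  · intro a ha ε hε
    filter_upwards [h ε hε, ha] with m h1 h2
    have := abs_le.1 h1
    linarith [this.1, this.2]

lemma abs_sSup_sub_le {S T : Set ℝ} (hS : (0:ℝ) ∈ S) (hT : (0:ℝ) ∈ T)
    {d₁ d₂ C : ℝ} (h1 : ∀ γ ∈ S, γ + d₁ ∈ T) (h2 : ∀ γ ∈ T, γ + d₂ ∈ S)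
    (hd₁ : |d₁| ≤ C) (hd₂ : |d₂| ≤ C) : |sSup S - sSup T| ≤ C := by
  have hC : 0 ≤ C := le_trans (abs_nonneg _) hd₁
  have had₁ := abs_le.1 hd₁
  have had₂ := abs_le.1 hd₂
  by_cases hbS : BddAbove S
  · have hbT : BddAbove T := by
      obtain ⟨M, hM⟩ := hbS
      exact ⟨M - d₂, fun γ hγ => by have := hM (h2 γ hγ); linarith⟩
    have hS' : S.Nonempty := ⟨0, hS⟩
    have hT' : T.Nonempty := ⟨0, hT⟩
    have e1 : sSup S ≤ sSup T - d₁ :=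
      csSup_le hS' fun γ hγ => by have := le_csSup hbT (h1 γ hγ); linarith
    have e2 : sSup T ≤ sSup S - d₂ :=
      csSup_le hT' fun γ hγ => by have := le_csSup hbS (h2 γ hγ); linarith
    rw [abs_le]
    constructor <;> linarith [had₁.1, had₁.2, had₂.1, had₂.2]
  · have hbT : ¬BddAbove T := by
      rintro ⟨M, hM⟩
      exact hbS ⟨M - d₁, fun γ hγ => by have := hM (h1 γ hγ); linarith⟩
    rw [Real.sSup_of_not_bddAbove hbS, Real.sSup_of_not_bddAbove hbT]
    simpa

lemma abs_sInf_sub_le {S T : Set ℝ} {lb d₁ d₂ C : ℝ}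
    (hSb : ∀ γ ∈ S, lb ≤ γ) (hTb : ∀ γ ∈ T, lb ≤ γ)
    (h1 : ∀ γ ∈ S, γ + d₁ ∈ T) (h2 : ∀ γ ∈ T, γ + d₂ ∈ S)
    (hd₁ : |d₁| ≤ C) (hd₂ : |d₂| ≤ C) : |sInf S - sInf T| ≤ C := by
  have hC : 0 ≤ C := le_trans (abs_nonneg _) hd₁
  have had₁ := abs_le.1 hd₁
  have had₂ := abs_le.1 hd₂
  by_cases hS : S.Nonempty
  · have hT : T.Nonempty := ⟨hS.choose + d₁, h1 _ hS.choose_spec⟩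
    have hbS : BddBelow S := ⟨lb, hSb⟩
    have hbT : BddBelow T := ⟨lb, hTb⟩
    have e1 : sInf T - d₁ ≤ sInf S :=
      le_csInf hS fun γ hγ => by have := csInf_le hbT (h1 γ hγ); linarith
    have e2 : sInf S - d₂ ≤ sInf T :=
      le_csInf hT fun γ hγ => by have := csInf_le hbS (h2 γ hγ); linarith
    rw [abs_le]
    constructor <;> linarith [had₁.1, had₁.2, had₂.1, had₂.2]
  · have hT : ¬T.Nonempty := fun ⟨γ, hγ⟩ => hS ⟨γ + d₂, h2 γ hγ⟩
    rw [not_nonempty_iff_eq_empty.1 hS, not_nonempty_iff_eq_empty.1 hT, Real.sInf_empty]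
    simpa

lemma SU_lower_bound (g : ℝ → ℝ) (m : ℕ) (γ : ℝ)
    (hsub : Ugrid (fun x => g x + γ) ⊆ peel^[m] (Ugrid g)) : (-1 : ℝ) ≤ γ := by
  by_contra hlt
  push_neg at hlt
  have hsub' : Ugrid (fun x => g x + γ) ⊆ Ugrid g := hsub.trans (peel_iterate_subset m _)
  have hp : (((0:ℤ):ℝ), ((⌈g 0 + γ⌉ : ℤ) : ℝ)) ∈ Ugrid (fun x => g x + γ) := by
    refine ⟨⟨0, ⌈g 0 + γ⌉, rfl⟩, ?_⟩
    simp only [Int.cast_zero]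
    exact Int.le_ceil _
  have h2 := (hsub' hp).2
  simp only [Int.cast_zero] at h2
  have hceil : ((⌈g 0 + γ⌉ : ℤ) : ℝ) < g 0 + γ + 1 := Int.ceil_lt_add_one _
  linarith

end Aux

lemma vBoth (g₁ g₂ : ℝ → ℝ) (r : ℤ) (c : ℝ) (hc0 : c ≤ 0) (hc1 : -1 ≤ c)
    (hkey : ∀ x : ℝ, g₁ (x + 1) + r = g₂ x + c) :
    vLower g₁ = vLower g₂ ∧ vUpper g₁ = vUpper g₂ := by
  set T : ℝ × ℝ → ℝ × ℝ := fun p => ((((-1:ℤ)):ℝ), (r:ℝ)) + p with hTdef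
  have hinj : Function.Injective T := fun p q h => by simpa [hTdef] using h
  -- translate Ugrid (g₁ + γ) to Ugrid (g₂ + c + γ)
  have hTγ : ∀ γ : ℝ, T '' Ugrid (fun x => g₁ x + γ) = Ugrid (fun x => (g₂ x + c) + γ) := by
    intro γ
    rw [hTdef, Ugrid_translate (fun x => g₁ x + γ) (-1) r]
    refine Ugrid_congr fun x => ?_
    have hx : x - ((-1:ℤ):ℝ) = x + 1 := by push_cast; ring
    rw [hx]
    have := hkey x
    linarith
  have hT0 : T '' Ugrid g₁ = Ugrid (fun x => g₂ x + c) := by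
    have := hTγ 0
    simp only [add_zero] at this
    rw [← this]
  -- vertical shift by an integer k
  have hD : ∀ (g : ℝ → ℝ) (k : ℤ),
      (fun p : ℝ × ℝ => (((0:ℤ):ℝ), ((k:ℤ):ℝ)) + p) '' Ugrid g = Ugrid (fun x => g x + k) := by
    intro g k
    rw [Ugrid_translate g 0 k]
    exact Ugrid_congr fun x => by rw [Int.cast_zero, sub_zero]
  -- basic inclusions
  have hBA : Ugrid g₂ ⊆ Ugrid (fun x => g₂ x + c) :=
    Ugrid_antitone fun x => by linarith
  have hAD : Ugrid (fun x => g₂ x + c) ⊆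
      (fun p : ℝ × ℝ => (((0:ℤ):ℝ), (((-1):ℤ):ℝ)) + p) '' Ugrid g₂ := by
    rw [hD g₂ (-1)]
    exact Ugrid_antitone fun x => by push_cast; linarith
  -- step 1 : translation identity for the γ-sets
  have step1L : ∀ (m : ℕ) (γ : ℝ),
      (peel^[m] (Ugrid g₁) ⊆ Ugrid (fun x => g₁ x + γ)) ↔
      (peel^[m] (Ugrid (fun x => g₂ x + c)) ⊆ Ugrid (fun x => (g₂ x + c) + γ)) := by
    intro m γ
    have h' : peel^[m] (Ugrid (fun x => g₂ x + c)) = T '' peel^[m] (Ugrid g₁) := by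
      rw [← hT0, hTdef, peel_iterate_translate]
    rw [h', ← hTγ γ, Set.image_subset_image_iff hinj]
  have step1U : ∀ (m : ℕ) (γ : ℝ),
      (Ugrid (fun x => g₁ x + γ) ⊆ peel^[m] (Ugrid g₁)) ↔
      (Ugrid (fun x => (g₂ x + c) + γ) ⊆ peel^[m] (Ugrid (fun x => g₂ x + c))) := by
    intro m γ
    have h' : peel^[m] (Ugrid (fun x => g₂ x + c)) = T '' peel^[m] (Ugrid g₁) := by
      rw [← hT0, hTdef, peel_iterate_translate]
    rw [h', ← hTγ γ, Set.image_subset_image_iff hinj]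
  -- step 2 : compare the γ-sets of (g₂ + c) and g₂
  -- lower-speed sets
  have hSL1 : ∀ (m : ℕ) (γ : ℝ),
      (peel^[m] (Ugrid g₂) ⊆ Ugrid (fun x => g₂ x + γ)) →
      (peel^[m] (Ugrid (fun x => g₂ x + c)) ⊆
        Ugrid (fun x => (g₂ x + c) + (γ + (-1 - c)))) := by
    intro m γ hγ
    calc peel^[m] (Ugrid (fun x => g₂ x + c))
        ⊆ peel^[m] ((fun p : ℝ × ℝ => (((0:ℤ):ℝ), (((-1):ℤ):ℝ)) + p) '' Ugrid g₂) :=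
          peel_iterate_mono m hAD
      _ = (fun p : ℝ × ℝ => (((0:ℤ):ℝ), (((-1):ℤ):ℝ)) + p) '' peel^[m] (Ugrid g₂) :=
          peel_iterate_translate m _ _
      _ ⊆ (fun p : ℝ × ℝ => (((0:ℤ):ℝ), (((-1):ℤ):ℝ)) + p) '' Ugrid (fun x => g₂ x + γ) :=
          Set.image_mono hγ
      _ = Ugrid (fun x => (g₂ x + γ) + (((-1):ℤ):ℝ)) := hD _ _
      _ = Ugrid (fun x => (g₂ x + c) + (γ + (-1 - c))) :=
          Ugrid_congr fun x => by push_cast; ring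
  have hSL2 : ∀ (m : ℕ) (γ : ℝ),
      (peel^[m] (Ugrid (fun x => g₂ x + c)) ⊆ Ugrid (fun x => (g₂ x + c) + γ)) →
      (peel^[m] (Ugrid g₂) ⊆ Ugrid (fun x => g₂ x + (γ + c))) := by
    intro m γ hγ
    calc peel^[m] (Ugrid g₂) ⊆ peel^[m] (Ugrid (fun x => g₂ x + c)) :=
          peel_iterate_mono m hBA
      _ ⊆ Ugrid (fun x => (g₂ x + c) + γ) := hγ
      _ = Ugrid (fun x => g₂ x + (γ + c)) := Ugrid_congr fun x => by ring
  -- upper-speed sets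
  have hSU1 : ∀ (m : ℕ) (γ : ℝ),
      (Ugrid (fun x => g₂ x + γ) ⊆ peel^[m] (Ugrid g₂)) →
      (Ugrid (fun x => (g₂ x + c) + (γ + (-c))) ⊆
        peel^[m] (Ugrid (fun x => g₂ x + c))) := by
    intro m γ hγ
    have he : Ugrid (fun x => (g₂ x + c) + (γ + (-c))) = Ugrid (fun x => g₂ x + γ) :=
      Ugrid_congr fun x => by ring
    rw [he]
    exact hγ.trans (peel_iterate_mono m hBA)
  have hSU2 : ∀ (m : ℕ) (γ : ℝ),
      (Ugrid (fun x => (g₂ x + c) + γ) ⊆ peel^[m] (Ugrid (fun x => g₂ x + c))) →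
      (Ugrid (fun x => g₂ x + (γ + (c + 1))) ⊆ peel^[m] (Ugrid g₂)) := by
    intro m γ hγ
    have hstep : peel^[m] (Ugrid (fun x => g₂ x + c)) ⊆
        (fun p : ℝ × ℝ => (((0:ℤ):ℝ), (((-1):ℤ):ℝ)) + p) '' peel^[m] (Ugrid g₂) := by
      rw [← peel_iterate_translate]
      exact peel_iterate_mono m hAD
    have himg := Set.image_mono (f := fun p : ℝ × ℝ => (((0:ℤ):ℝ), ((1:ℤ):ℝ)) + p)
      (hγ.trans hstep)
    have hcancel : (fun p : ℝ × ℝ => (((0:ℤ):ℝ), ((1:ℤ):ℝ)) + p) ''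
        ((fun p : ℝ × ℝ => (((0:ℤ):ℝ), (((-1):ℤ):ℝ)) + p) '' peel^[m] (Ugrid g₂))
        = peel^[m] (Ugrid g₂) := by
      have hv : ((((0:ℤ):ℝ), (((-1):ℤ):ℝ)) : ℝ × ℝ) = -(((0:ℤ):ℝ), ((1:ℤ):ℝ)) := by
        norm_num [Prod.ext_iff]
      rw [hv]
      exact translate_cancel _ _
    rw [hcancel] at himg
    have hL : (fun p : ℝ × ℝ => (((0:ℤ):ℝ), ((1:ℤ):ℝ)) + p) ''
        Ugrid (fun x => (g₂ x + c) + γ) = Ugrid (fun x => g₂ x + (γ + (c + 1))) := by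
      rw [hD (fun x => (g₂ x + c) + γ) 1]
      exact Ugrid_congr fun x => by push_cast; ring
    rw [hL] at himg
    exact himg
  -- zero is always in the lower-speed set
  have h0 : ∀ (g : ℝ → ℝ) (m : ℕ), peel^[m] (Ugrid g) ⊆ Ugrid (fun x => g x + 0) := by
    intro g m
    have : Ugrid (fun x => g x + 0) = Ugrid g := Ugrid_congr fun x => by rw [add_zero]
    rw [this]
    exact peel_iterate_subset m _
  -- per-m bounds
  have keyL : ∀ m : ℕ,
      |sSup {γ : ℝ | peel^[m] (Ugrid g₁) ⊆ Ugrid (fun x => g₁ x + γ)} -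
        sSup {γ : ℝ | peel^[m] (Ugrid g₂) ⊆ Ugrid (fun x => g₂ x + γ)}| ≤ 1 := by
    intro m
    have hsets : {γ : ℝ | peel^[m] (Ugrid g₁) ⊆ Ugrid (fun x => g₁ x + γ)} =
        {γ : ℝ | peel^[m] (Ugrid (fun x => g₂ x + c)) ⊆
          Ugrid (fun x => (g₂ x + c) + γ)} := Set.ext fun γ => step1L m γ
    rw [hsets, abs_sub_comm]
    refine abs_sSup_sub_le (h0 g₂ m) (h0 _ m)
      (d₁ := -1 - c) (d₂ := c) (fun γ hγ => hSL1 m γ hγ) (fun γ hγ => hSL2 m γ hγ) ?_ ?_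
    · rw [abs_le]; constructor <;> linarith
    · rw [abs_le]; constructor <;> linarith
  have keyU : ∀ m : ℕ,
      |sInf {γ : ℝ | Ugrid (fun x => g₁ x + γ) ⊆ peel^[m] (Ugrid g₁)} -
        sInf {γ : ℝ | Ugrid (fun x => g₂ x + γ) ⊆ peel^[m] (Ugrid g₂)}| ≤ 1 := by
    intro m
    have hsets : {γ : ℝ | Ugrid (fun x => g₁ x + γ) ⊆ peel^[m] (Ugrid g₁)} =
        {γ : ℝ | Ugrid (fun x => (g₂ x + c) + γ) ⊆
          peel^[m] (Ugrid (fun x => g₂ x + c))} := Set.ext fun γ => step1U m γ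
    rw [hsets, abs_sub_comm]
    refine abs_sInf_sub_le (lb := -1)
      (fun γ hγ => SU_lower_bound g₂ m γ hγ)
      (fun γ hγ => SU_lower_bound (fun x => g₂ x + c) m γ hγ)
      (d₁ := -c) (d₂ := c + 1) (fun γ hγ => hSU1 m γ hγ) (fun γ hγ => hSU2 m γ hγ) ?_ ?_
    · rw [abs_le]; constructor <;> linarith
    · rw [abs_le]; constructor <;> linarith
  -- final : divide by m and pass to liminf / limsup
  have hclose : ∀ (s₁ s₂ : ℕ → ℝ), (∀ m, |s₁ m - s₂ m| ≤ 1) →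
      ∀ ε > (0:ℝ), ∀ᶠ m in atTop, |s₁ m / m - s₂ m / m| ≤ ε := by
    intro s₁ s₂ hs ε hε
    obtain ⟨N, hN⟩ := exists_nat_ge (1 / ε)
    filter_upwards [eventually_ge_atTop (max N 1)] with m hm
    have hm1 : (1:ℕ) ≤ m := le_trans (le_max_right _ _) hm
    have hmR : (1:ℝ) ≤ (m:ℝ) := by exact_mod_cast hm1
    have hmpos : (0:ℝ) < (m:ℝ) := by linarith
    have hmN : (N:ℝ) ≤ (m:ℝ) := by
      exact_mod_cast le_trans (le_max_left _ _) hm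
    have h1m : 1 / (m:ℝ) ≤ ε := by
      rw [div_le_iff₀ hmpos]
      have h1ε : 1 / ε ≤ (m:ℝ) := le_trans hN hmN
      calc (1:ℝ) = ε * (1 / ε) := by field_simp
        _ ≤ ε * (m:ℝ) := by
            exact mul_le_mul_of_nonneg_left h1ε (le_of_lt hε)
    calc |s₁ m / m - s₂ m / m| = |s₁ m - s₂ m| / (m:ℝ) := by
          rw [div_sub_div_same, abs_div, abs_of_pos hmpos]
      _ ≤ 1 / (m:ℝ) := by gcongr; exact hs m
      _ ≤ ε := h1m
  constructor
  · rw [vLower, vLower]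
    exact liminf_eq_of_close (hclose _ _ keyL)
  · rw [vUpper, vUpper]
    exact limsup_eq_of_close (hclose _ _ keyU)

/-- The parabolas y = a·x² + b·x and y = a·x² + (b + 2a)·x have the same lower and
upper average speeds under grid peeling. -/
theorem averageSpeed_period_b (a b : ℝ) (ha : 0 < a) :
    vLower (fun x => a * x ^ 2 + b * x) = vLower (fun x => a * x ^ 2 + (b + 2 * a) * x) ∧
    vUpper (fun x => a * x ^ 2 + b * x) = vUpper (fun x => a * x ^ 2 + (b + 2 * a) * x) := by
  refine vBoth _ _ (-⌈a + b⌉) (a + b - ⌈a + b⌉) ?_ ?_ ?_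
  · have := Int.le_ceil (a + b); linarith
  · have := Int.ceil_lt_add_one (a + b); linarith
  · intro x
    push_cast
    ring
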